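/- Fix ρ ∈ (0,1). Then the function ψ_ρ : (0,1) → ℝ defined by ψ_ρ(H) = ρ^{2H} − (1/4)·(1 + ρ^{2H} − (1 − ρ)^{2H})² is decreasing in H; that is, for all 0 < H ≤ H' < 1, ψ_ρ(H') ≤ ψ_ρ(H). -/

import Mathlib

/-!
Write `a = ρ^{2H}` and `b = (1-ρ)^{2H}`, so `ψ_ρ(H) = a - (1 + a - b)² / 4`. Both `a` and `b`
lie in `[0,1]` and decrease as `H` grows, while on `[0,1]²` the expression
`a - (1 + a - b)² / 4` is increasing in each variable: its partial derivatives are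
`1 - (1 + a - b)/2 ≥ 0` and `(1 + a - b)/2 ≥ 0`.
-/

open Set

theorem monotoneOn_sub_one_add_sub_sq_div_four :
    MonotoneOn (fun p : ℝ × ℝ => p.1 - 1/4 * (1 + p.1 - p.2) ^ 2) (Icc 0 1 ×ˢ Icc 0 1) := by
  rintro ⟨a', b'⟩ ⟨⟨ha'₀, ha'₁⟩, hb'₀, hb'₁⟩ ⟨a, b⟩ ⟨⟨ha₀, ha₁⟩, hb₀, hb₁⟩ ⟨ha'a, hb'b⟩
  dsimp only
  set s := (1 + a - b) + (1 + a' - b')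
  have hs₀ : 0 ≤ s := by linarith
  have hs₄ : s ≤ 4 := by linarith
  have key : (a - 1/4 * (1 + a - b) ^ 2) - (a' - 1/4 * (1 + a' - b') ^ 2)
      = (a - a') * (1 - s / 4) + (b - b') * (s / 4) := by ring
  rw [← sub_nonneg, key]
  apply add_nonneg <;> apply mul_nonneg <;> linarith

theorem Real.rpow_mem_Icc_zero_one {x y : ℝ} (hx : x ∈ Icc 0 1) (hy : 0 ≤ y) :
    x ^ y ∈ Icc 0 1 :=
  ⟨Real.rpow_nonneg hx.1 y, Real.rpow_le_one hx.1 hx.2 hy⟩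

theorem psi_decreasing (ρ : ℝ) (hρ : ρ ∈ Set.Ioo (0:ℝ) 1)
    (H H' : ℝ) (hH : 0 < H) (hHH' : H ≤ H') :
    ρ ^ (2 * H') - 1/4 * (1 + ρ ^ (2 * H') - (1 - ρ) ^ (2 * H')) ^ 2 ≤
      ρ ^ (2 * H) - 1/4 * (1 + ρ ^ (2 * H) - (1 - ρ) ^ (2 * H)) ^ 2 := by
  have hρ' : ρ ∈ Icc (0:ℝ) 1 := Ioo_subset_Icc_self hρ
  have hσ : 1 - ρ ∈ Icc (0:ℝ) 1 := ⟨by linarith [hρ.2], by linarith [hρ.1]⟩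
  have h2H : 0 ≤ 2 * H := by linarith
  have h2H' : 0 ≤ 2 * H' := by linarith
  have hle : 2 * H ≤ 2 * H' := by linarith
  exact monotoneOn_sub_one_add_sub_sq_div_four
    (mk_mem_prod (Real.rpow_mem_Icc_zero_one hρ' h2H') (Real.rpow_mem_Icc_zero_one hσ h2H'))
    (mk_mem_prod (Real.rpow_mem_Icc_zero_one hρ' h2H) (Real.rpow_mem_Icc_zero_one hσ h2H))
    ⟨Real.rpow_le_rpow_of_exponent_ge' hρ'.1 hρ'.2 h2H hle,
      Real.rpow_le_rpow_of_exponent_ge' hσ.1 hσ.2 h2H hle⟩
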